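/- arXiv:1602.05337 — 7 statements merged into one kernel-verified Lean document; each statement's English description precedes it below -/
import Mathlib

section
/- The sequence (β_n), where β_n is the largest positive real root of x^n = x^{n-2} + ... + x + 1, is strictly increasing in n. -/
/-!
If `β` is a positive root of `x^m = 1 + x + ⋯ + x^{m-2}` and `m < n`, then multiplying that
equation by `β^{n-m}` gives `1 + β + ⋯ + β^{n-2} = (1 + β + ⋯ + β^{n-m-1}) + β^n > β^n`, whereas
`1 + x + ⋯ + x^{n-2} < x^n` as soon as `x ≥ 2`. The intermediate value theorem then yields a root
of the `n`-th equation strictly larger than `β`, so the largest one exceeds `β_m`.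
-/

open Finset Set

lemma geom_sum_lt_pow_of_two_le {x : ℝ} (hx : 2 ≤ x) (k : ℕ) :
    ∑ i ∈ range k, x ^ i < x ^ k := by
  have hsum_nonneg : 0 ≤ ∑ i ∈ range k, x ^ i := sum_nonneg fun i _ => by positivity
  calc ∑ i ∈ range k, x ^ i
      ≤ (∑ i ∈ range k, x ^ i) * (x - 1) := le_mul_of_one_le_right hsum_nonneg (by linarith)
    _ = x ^ k - 1 := geom_sum_mul x k
    _ < x ^ k := sub_one_lt _

lemma geom_sum_pred_lt_pow_of_two_le {x : ℝ} (hx : 2 ≤ x) (n : ℕ) :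
    ∑ i ∈ range (n - 1), x ^ i < x ^ n :=
  (geom_sum_lt_pow_of_two_le hx _).trans_le (pow_le_pow_right₀ (by linarith) (by omega))

lemma geom_sum_pred_eq_of_pow_eq_geom_sum_pred {x : ℝ} {m : ℕ} (hm : 1 ≤ m)
    (hx : x ^ m = ∑ i ∈ range (m - 1), x ^ i) {n : ℕ} (hmn : m ≤ n) :
    ∑ i ∈ range (n - 1), x ^ i = ∑ i ∈ range (n - m), x ^ i + x ^ n := by
  have hsplit : n - 1 = (n - m) + (m - 1) := by omega
  rw [hsplit, sum_range_add]
  congr 1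
  rw [← pow_sub_mul_pow x hmn]
  simp only [pow_add, ← mul_sum, ← hx]

lemma pow_lt_geom_sum_pred_of_pow_eq_geom_sum_pred {x : ℝ} (hx₀ : 0 < x) {m : ℕ} (hm : 1 ≤ m)
    (hx : x ^ m = ∑ i ∈ range (m - 1), x ^ i) {n : ℕ} (hmn : m < n) :
    x ^ n < ∑ i ∈ range (n - 1), x ^ i := by
  have hpos : 0 < ∑ i ∈ range (n - m), x ^ i :=
    sum_pos (fun i _ => pow_pos hx₀ i) ⟨0, mem_range.2 (by omega)⟩
  rw [geom_sum_pred_eq_of_pow_eq_geom_sum_pred hm hx hmn.le]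
  linarith

lemma exists_mem_Ioc_pow_eq_geom_sum {a b : ℝ} (hab : a ≤ b) {n k : ℕ}
    (ha : a ^ n < ∑ i ∈ range k, a ^ i) (hb : ∑ i ∈ range k, b ^ i ≤ b ^ n) :
    ∃ c ∈ Ioc a b, c ^ n = ∑ i ∈ range k, c ^ i := by
  let f : ℝ → ℝ := fun x => x ^ n - ∑ i ∈ range k, x ^ i
  have hf : ContinuousOn f (Icc a b) := by fun_prop
  have h0 : (0 : ℝ) ∈ Ioc (f a) (f b) := ⟨sub_neg.2 ha, sub_nonneg.2 hb⟩
  obtain ⟨c, hc, hfc⟩ := intermediate_value_Ioc hab hf h0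
  exact ⟨c, hc, sub_eq_zero.1 hfc⟩

/-- The sequence `(β_n)` of largest positive real roots of
`x^n = x^{n-2} + ⋯ + x + 1` is strictly increasing in `n`. -/
theorem stmt1 (m n : ℕ) (hm : 3 ≤ m) (hmn : m < n)
    (βm βn : ℝ)
    (hβm : 0 < βm ∧ βm ^ m = ∑ i ∈ Finset.range (m - 1), βm ^ i ∧
      ∀ x : ℝ, 0 < x → x ^ m = ∑ i ∈ Finset.range (m - 1), x ^ i → x ≤ βm)
    (hβn : 0 < βn ∧ βn ^ n = ∑ i ∈ Finset.range (n - 1), βn ^ i ∧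
      ∀ x : ℝ, 0 < x → x ^ n = ∑ i ∈ Finset.range (n - 1), x ^ i → x ≤ βn) :
    βm < βn := by
  obtain ⟨hβm₀, hβm_root, -⟩ := hβm
  obtain ⟨c, ⟨hβm_lt_c, -⟩, hc_root⟩ := exists_mem_Ioc_pow_eq_geom_sum (le_max_left βm 2)
    (pow_lt_geom_sum_pred_of_pow_eq_geom_sum_pred hβm₀ (by omega) hβm_root hmn)
    (geom_sum_pred_lt_pow_of_two_le (le_max_right βm 2) n).le
  exact hβm_lt_c.trans_le (hβn.2.2 c (hβm₀.trans hβm_lt_c) hc_root)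
end

section
/- The sequence (β_n) of largest positive real roots of x^n = x^{n-2} + ... + x + 1 converges to the golden ratio (1+√5)/2 as n → ∞. -/
/-!
With `n = m + 1`, multiplying `x^n - (x^(m-1) + ⋯ + 1)` by `x - 1` gives `x^m (x² - x - 1) + 1`. At a positive
root this forces `x² - x - 1 < 0`, i.e. every root lies below `φ`. Conversely, for `1 < a < φ`
the factor `x² - x - 1` is negative at `a`, so for large `m` the polynomial is negative at `a`
while it is positive at `φ`, and the intermediate value theorem puts a root in `[a, φ]`.
-/

open Filter Topology Finset Real goldenRatio

theorem sub_one_mul_pow_succ_sub_geom_sum {R : Type*} [CommRing R] (x : R) (m : ℕ) :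
    (x - 1) * (x ^ (m + 1) - ∑ i ∈ range m, x ^ i) = x ^ m * (x ^ 2 - x - 1) + 1 := by
  linear_combination -geom_sum_mul x m

theorem sq_sub_sub_one_eq_mul (x : ℝ) : x ^ 2 - x - 1 = (x - φ) * (x - ψ) := by
  linear_combination x * goldenRatio_add_goldenConj - goldenRatio_mul_goldenConj

theorem sq_sub_sub_one_neg_iff {x : ℝ} (hx : ψ < x) : x ^ 2 - x - 1 < 0 ↔ x < φ := by
  rw [sq_sub_sub_one_eq_mul, ← sub_neg (a := x)]
  exact ⟨fun h ↦ neg_of_mul_neg_left h (sub_pos.2 hx).le,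
    fun h ↦ mul_neg_of_neg_of_pos h (sub_pos.2 hx)⟩

theorem lt_goldenRatio_of_pow_succ_eq_geom_sum {x : ℝ} {m : ℕ} (hx : 0 < x)
    (h : x ^ (m + 1) = ∑ i ∈ range m, x ^ i) : x < φ := by
  have key := sub_one_mul_pow_succ_sub_geom_sum x m
  rw [h, sub_self, mul_zero] at key
  refine (sq_sub_sub_one_neg_iff (goldenConj_neg.trans hx)).1 ?_
  exact neg_of_mul_neg_right (by linarith) (pow_nonneg hx.le m)

theorem eventually_exists_mem_Icc_pow_succ_eq_geom_sum {a : ℝ} (ha : 1 < a) (haφ : a < φ) :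
    ∀ᶠ m in atTop, ∃ c ∈ Set.Icc a φ, c ^ (m + 1) = ∑ i ∈ range m, c ^ i := by
  have hgap : 0 < 1 + a - a ^ 2 := by
    linarith [(sq_sub_sub_one_neg_iff (goldenConj_neg.trans (zero_lt_one.trans ha))).2 haφ]
  filter_upwards [(tendsto_pow_atTop_atTop_of_one_lt ha).eventually_gt_atTop (1 + a - a ^ 2)⁻¹]
    with m hm
  set f : ℝ → ℝ := fun x ↦ x ^ (m + 1) - ∑ i ∈ range m, x ^ i
  have hfa : f a ≤ 0 := by
    have key := sub_one_mul_pow_succ_sub_geom_sum a m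
    have : 1 < a ^ m * (1 + a - a ^ 2) := (inv_lt_iff_one_lt_mul₀ hgap).1 hm
    nlinarith
  have hfφ : 0 ≤ f φ := by
    have key := sub_one_mul_pow_succ_sub_geom_sum φ m
    rw [sq_sub_sub_one_eq_mul, sub_self, zero_mul, mul_zero, zero_add] at key
    nlinarith [one_lt_goldenRatio]
  obtain ⟨c, hc, hfc⟩ :=
    intermediate_value_Icc haφ.le (by fun_prop : Continuous f).continuousOn ⟨hfa, hfφ⟩
  exact ⟨c, hc, sub_eq_zero.1 hfc⟩

/-- The sequence `(β_n)` of largest positive real roots of `x^n = x^{n-2} + ⋯ + x + 1`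
converges to the golden ratio `(1 + √5)/2` as `n → ∞`. -/
theorem stmt2 (β : ℕ → ℝ)
    (hβ : ∀ n, 3 ≤ n → 0 < β n ∧ (β n) ^ n = ∑ i ∈ Finset.range (n - 1), (β n) ^ i ∧
      ∀ x : ℝ, 0 < x → x ^ n = ∑ i ∈ Finset.range (n - 1), x ^ i → x ≤ β n) :
    Filter.Tendsto β Filter.atTop (nhds ((1 + Real.sqrt 5) / 2)) := by
  show Tendsto β atTop (𝓝 φ)
  rw [← tendsto_add_atTop_iff_nat 1]
  have hroot (m : ℕ) (hm : 2 ≤ m) : 0 < β (m + 1) ∧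
      β (m + 1) ^ (m + 1) = ∑ i ∈ range m, β (m + 1) ^ i ∧
      ∀ x : ℝ, 0 < x → x ^ (m + 1) = ∑ i ∈ range m, x ^ i → x ≤ β (m + 1) := by
    simpa only [Nat.add_sub_cancel] using hβ (m + 1) (by omega)
  refine tendsto_order.2 ⟨fun a ha ↦ ?_, fun b hb ↦ ?_⟩
  · obtain ⟨a', ha', ha'φ⟩ := exists_between (max_lt ha one_lt_goldenRatio)
    have ha'1 : 1 < a' := (le_max_right a 1).trans_lt ha'
    filter_upwards [eventually_exists_mem_Icc_pow_succ_eq_geom_sum ha'1 ha'φ,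
      eventually_ge_atTop 2] with m ⟨c, hc, hcroot⟩ hm
    have hcβ : c ≤ β (m + 1) := (hroot m hm).2.2 c (by linarith [hc.1]) hcroot
    linarith [le_max_left a 1, hc.1]
  · filter_upwards [eventually_ge_atTop 2] with m hm
    obtain ⟨hpos, hβroot, -⟩ := hroot m hm
    exact (lt_goldenRatio_of_pow_succ_eq_geom_sum hpos hβroot).trans hb
end

section
/- Let n ≥ 3 and β be the largest positive root of x^n = x^{n-2} + ... + x + 1, with a = 1/(β²−1), T_0(x) = βx, T_1(x) = βx − 1, and b = β/(β²−1). Then T_0^{n-1}(T_1(a)) = a and T_1^{n-1}(T_0(b)) = b. -/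
/-!
Write `m = n - 1`, so that `β ^ (m + 1) = ∑ i < m, β ^ i`. Multiplying by `β - 1` turns the
geometric sum into `β ^ m - 1`, giving the single identity `β ^ m * (1 + β - β ^ 2) = 1`.
Both orbits are then explicit: `T₀^[m] (β a - 1) = β ^ m (β a - 1)` and
`T₁^[m] (β b) = β ^ (m + 1) b - ∑ i < m, β ^ i = β ^ (m + 1) (b - 1)`, and after clearing the
denominator `β ^ 2 - 1` each fixed-point equation is that identity.
-/

open Finset

lemma sub_one_iterate_mul_apply {R : Type*} [CommRing R] (β x : R) (k : ℕ) :
    (fun x : R => β * x - 1)^[k] x = β ^ k * x - ∑ i ∈ range k, β ^ i := by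
  induction k with
  | zero => simp
  | succ k ih =>
    rw [Function.iterate_succ_apply', ih, geom_sum_succ]
    ring

lemma one_lt_of_pow_succ_eq_geom_sum {β : ℝ} {m : ℕ} (hm : 2 ≤ m) (hβ : 0 < β)
    (h : β ^ (m + 1) = ∑ i ∈ range m, β ^ i) : 1 < β := by
  by_contra! hle
  have hpow : β ^ (m + 1) ≤ β := pow_le_of_le_one hβ.le hle (by omega)
  have hsum : ∑ i ∈ range 2, β ^ i ≤ ∑ i ∈ range m, β ^ i :=
    sum_le_sum_of_subset_of_nonneg (range_subset_range.mpr hm) fun i _ _ => by positivity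
  simp only [sum_range_succ, sum_range_zero, pow_zero, pow_one] at hsum
  linarith

lemma pow_mul_one_add_sub_sq_of_pow_succ_eq_geom_sum {R : Type*} [CommRing R] {β : R} {m : ℕ}
    (h : β ^ (m + 1) = ∑ i ∈ range m, β ^ i) : β ^ m * (1 + β - β ^ 2) = 1 := by
  have h' := congrArg (· * (β - 1)) h
  simp only [geom_sum_mul] at h'
  linear_combination -h'

/-- Let `β` be the largest positive root of `x^n = x^{n-2} + ⋯ + x + 1` (`n ≥ 3`),
`a = 1/(β²-1)`, `b = β/(β²-1)`. Then `T₀^{n-1}(T₁ a) = a` and `T₁^{n-1}(T₀ b) = b`,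
where `T₀ x = βx`, `T₁ x = βx - 1`. -/
theorem stmt6 (n : ℕ) (hn : 3 ≤ n) (β : ℝ)
    (hβ : 0 < β ∧ β ^ n = ∑ i ∈ Finset.range (n - 1), β ^ i ∧
      ∀ x : ℝ, 0 < x → x ^ n = ∑ i ∈ Finset.range (n - 1), x ^ i → x ≤ β)
    (a b : ℝ) (ha : a = (β ^ 2 - 1)⁻¹) (hb : b = β * (β ^ 2 - 1)⁻¹) :
    (fun x : ℝ => β * x)^[n - 1] (β * a - 1) = a ∧
    (fun x : ℝ => β * x - 1)^[n - 1] (β * b) = b := by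
  obtain ⟨hβ0, hroot, -⟩ := hβ
  obtain ⟨m, rfl⟩ : ∃ m, n = m + 1 := ⟨n - 1, by omega⟩
  rw [Nat.add_sub_cancel] at hroot ⊢
  have hβ1 : 1 < β := one_lt_of_pow_succ_eq_geom_sum (by omega) hβ0 hroot
  have hkey := pow_mul_one_add_sub_sq_of_pow_succ_eq_geom_sum hroot
  have hsq : β ^ 2 - 1 ≠ 0 := by nlinarith
  constructor
  · rw [mul_left_iterate_apply, ha]
    field_simp
    linear_combination hkey
  · rw [sub_one_iterate_mul_apply, ← hroot, hb]
    field_simp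
    linear_combination β * hkey
end

section
/- With a_n = det(λE − S_n) (characteristic polynomial of the adjacency matrix S_n), the recursion a_{n+1} = λ² a_n − 2λ^n holds for n ≥ 3, with a_3 = λ²(λ³ − 2λ − 2); consequently a_n = λ^{n-1}(λ^n − 2(1 + λ + λ² + ... + λ^{n-2})). -/
/-!
`S_n` is the adjacency matrix of a directed graph with a hub `n - 1` that points to every other
vertex and is fed by two directed paths ("arms") of `n - 1` vertices each. `hubAdjMat R N p` is
the same pattern with the hub at index `p`, i.e. arms of lengths `p` and `q = N - 1 - p`; write
`D p q = det (λ • 1 - hubAdjMat R (p + q + 1) p)`.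

Expanding along the column of the arm vertex farthest from the hub, the only other nonzero entry
lies in the hub row, and its minor is triangular; this gives `D (p + 1) q = λ D p q - λ ^ q`.
Reversing the order of the vertices swaps the two arms, so `D 0 q = D q 0`, and with `D 0 0 = λ`
one gets `D p q = λ ^ (p + q + 1) - λ ^ q (1 + ⋯ + λ ^ (p - 1)) - λ ^ p (1 + ⋯ + λ ^ (q - 1))`.
Taking `p = q = n - 1` gives the closed form, and the recursion is a geometric-sum identity.
-/

/-- The `(2n-1)×(2n-1)` adjacency matrix of the Markov partition for the shrinking
random β-transformation: row `k` (`0 ≤ k ≤ n-2`) has a `1` in column `k+1` only,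
row `n-1` has `1`'s in all columns except column `n-1`, and row `n-1+i`
(`1 ≤ i ≤ n-1`) has a `1` in column `n-2+i` only. -/
def adjMat (n : ℕ) : Matrix (Fin (2 * n - 1)) (Fin (2 * n - 1)) ℝ := fun r c =>
  if r.val < n - 1 then (if c.val = r.val + 1 then 1 else 0)
  else if r.val = n - 1 then (if c.val = n - 1 then 0 else 1)
  else (if c.val = r.val - 1 then 1 else 0)

open Matrix Finset

variable {R : Type*} [CommRing R]

variable (R) in
def hubAdjMat (N p : ℕ) : Matrix (Fin N) (Fin N) R := fun r c =>
  if r.val < p then (if c.val = r.val + 1 then 1 else 0)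
  else if r.val = p then (if c.val = p then 0 else 1)
  else (if c.val = r.val - 1 then 1 else 0)

lemma hubAdjMat_submatrix_succ (N p : ℕ) :
    (hubAdjMat R (N + 1) (p + 1)).submatrix Fin.succ Fin.succ = hubAdjMat R N p := by
  ext i j
  simp only [submatrix_apply, hubAdjMat, Fin.val_succ]
  split_ifs <;> first | rfl | omega

lemma hubAdjMat_submatrix_revPerm (p q : ℕ) :
    (hubAdjMat R (p + q + 1) p).submatrix Fin.revPerm Fin.revPerm = hubAdjMat R (p + q + 1) q := by
  ext i j
  simp only [submatrix_apply, hubAdjMat, Fin.revPerm_apply, Fin.val_rev]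
  split_ifs <;> first | rfl | omega

lemma submatrix_smul_one_sub {m n : Type*} [DecidableEq m] [DecidableEq n] (l : R)
    (A : Matrix m m R) {e : n → m} (he : Function.Injective e) :
    (l • 1 - A).submatrix e e = l • 1 - A.submatrix e e := by
  ext i j
  simp [one_apply, he.eq_iff]

lemma det_smul_one_sub_submatrix_equiv {m n : Type*} [Fintype m] [DecidableEq m] [Fintype n]
    [DecidableEq n] (l : R) (A : Matrix m m R) (e : n ≃ m) :
    det (l • 1 - A.submatrix e e) = det (l • 1 - A) := by
  rw [← submatrix_smul_one_sub l A e.injective, det_submatrix_equiv_self]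

lemma smul_one_sub_hubAdjMat_apply_zero (N p : ℕ) (l : R) (i : Fin (N + 1)) :
    (l • 1 - hubAdjMat R (N + 1) (p + 1)) i 0 =
      if i.val = 0 then l else if i.val = p + 1 then -1 else 0 := by
  simp only [Matrix.sub_apply, Matrix.smul_apply, one_apply, hubAdjMat, Fin.ext_iff,
    Fin.val_zero, smul_eq_mul]
  split_ifs <;> grind

lemma det_smul_one_sub_hubAdjMat_submatrix_succAbove (p q : ℕ) (l : R) :
    det ((l • 1 - hubAdjMat R (p + q + 1 + 1) (p + 1)).submatrix
      (Fin.succAbove ⟨p + 1, by omega⟩) Fin.succ) = (-1) ^ (p + 1) * l ^ q := by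
  set M := (l • 1 - hubAdjMat R (p + q + 1 + 1) (p + 1)).submatrix
    (Fin.succAbove ⟨p + 1, by omega⟩) Fin.succ with hM
  -- Without the hub row, the arm edges `r → r + 1` become the diagonal entries `-1`.
  have hlower : M.IsLowerTriangular := fun i j (hij : i.val < j.val) => by
    simp only [hM, submatrix_apply, Matrix.sub_apply, Matrix.smul_apply, one_apply, hubAdjMat,
      Fin.ext_iff, Fin.succAbove, Fin.lt_def, Fin.val_castSucc, Fin.val_succ, smul_eq_mul]
    split_ifs <;> grind
  have hdiag (i : Fin (p + q + 1)) : M i i = if i.val < p + 1 then -1 else l := by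
    simp only [hM, submatrix_apply, Matrix.sub_apply, Matrix.smul_apply, one_apply, hubAdjMat,
      Fin.ext_iff, Fin.succAbove, Fin.lt_def, Fin.val_castSucc, Fin.val_succ, smul_eq_mul]
    split_ifs <;> grind
  rw [det_of_isLowerTriangular M hlower, Fintype.prod_congr _ _ hdiag,
    Fin.prod_univ_eq_prod_range (fun i => if i < p + 1 then (-1 : R) else l),
    show p + q + 1 = (p + 1) + q by omega, prod_range_add,
    prod_congr rfl fun i hi => if_pos (mem_range.mp hi),
    prod_congr rfl fun i _ => if_neg (by omega), prod_const, prod_const, card_range, card_range]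

lemma det_smul_one_sub_hubAdjMat_succ (p q : ℕ) (l : R) :
    det (l • 1 - hubAdjMat R (p + q + 1 + 1) (p + 1)) =
      l * det (l • 1 - hubAdjMat R (p + q + 1) p) - l ^ q := by
  rw [det_succ_column_zero, Fintype.sum_eq_add 0 ⟨p + 1, by omega⟩ (by simp [Fin.ext_iff])
    fun i hi => by
      rw [smul_one_sub_hubAdjMat_apply_zero, if_neg (Fin.val_ne_zero_iff.mpr hi.1),
        if_neg fun h => hi.2 (Fin.ext h), mul_zero, zero_mul]]
  rw [smul_one_sub_hubAdjMat_apply_zero, smul_one_sub_hubAdjMat_apply_zero,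
    det_smul_one_sub_hubAdjMat_submatrix_succAbove, Fin.succAbove_zero,
    submatrix_smul_one_sub _ _ (Fin.succ_injective _), hubAdjMat_submatrix_succ]
  have hsign : ((-1 : R) ^ (p + 1)) ^ 2 = 1 := by
    rw [← pow_mul, mul_comm, pow_mul, neg_one_sq, one_pow]
  simp only [Fin.val_zero, if_true, pow_zero, if_neg (Nat.succ_ne_zero p)]
  linear_combination (-l ^ q) * hsign

lemma det_smul_one_sub_hubAdjMat_hub_last (p : ℕ) (l : R) :
    det (l • 1 - hubAdjMat R (p + 1) p) = l ^ (p + 1) - ∑ t ∈ range p, l ^ t := by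
  induction p with
  | zero => simp [det_unique, hubAdjMat]
  | succ p ih =>
    rw [det_smul_one_sub_hubAdjMat_succ p 0, add_zero, ih, pow_zero, geom_sum_succ]
    ring

lemma det_smul_one_sub_hubAdjMat (p q : ℕ) (l : R) :
    det (l • 1 - hubAdjMat R (p + q + 1) p) =
      l ^ (p + q + 1) - l ^ q * ∑ t ∈ range p, l ^ t - l ^ p * ∑ t ∈ range q, l ^ t := by
  induction p with
  | zero =>
    rw [← det_smul_one_sub_submatrix_equiv l _ Fin.revPerm, hubAdjMat_submatrix_revPerm, zero_add, det_smul_one_sub_hubAdjMat_hub_last]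
    simp
  | succ p ih =>
    rw [show p + 1 + q + 1 = p + q + 1 + 1 by ring, det_smul_one_sub_hubAdjMat_succ, ih,
      geom_sum_succ]
    ring

lemma det_smul_one_sub_adjMat {n : ℕ} (hn : 1 ≤ n) (l : ℝ) :
    det (l • 1 - adjMat n) = l ^ (n - 1) * (l ^ n - 2 * ∑ t ∈ range (n - 1), l ^ t) := by
  obtain ⟨k, rfl⟩ : ∃ k, n = k + 1 := ⟨n - 1, by omega⟩
  -- `adjMat (k + 1)` is `hubAdjMat ℝ (2 * (k + 1) - 1) k` by definition; the dimension is
  -- generalized so that it can be identified with `k + k + 1`.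
  have key : ∀ N, N = k + k + 1 →
      det (l • 1 - hubAdjMat ℝ N k) = l ^ k * (l ^ (k + 1) - 2 * ∑ t ∈ range k, l ^ t) := by
    rintro N rfl
    rw [det_smul_one_sub_hubAdjMat]
    ring
  exact key _ (by omega)

/-- With `a_n = det(λI - S_n)`, the recursion `a_{n+1} = λ² a_n - 2 λ^n` holds for
`n ≥ 3`, with `a_3 = λ²(λ³ - 2λ - 2)`; consequently
`a_n = λ^{n-1}(λ^n - 2(1 + λ + ⋯ + λ^{n-2}))`. -/
theorem stmt13 (l : ℝ) :
    (∀ n : ℕ, 3 ≤ n →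
      (l • (1 : Matrix (Fin (2 * (n + 1) - 1)) (Fin (2 * (n + 1) - 1)) ℝ) - adjMat (n + 1)).det
        = l ^ 2 * (l • (1 : Matrix (Fin (2 * n - 1)) (Fin (2 * n - 1)) ℝ) - adjMat n).det
          - 2 * l ^ n) ∧
    (l • (1 : Matrix (Fin (2 * 3 - 1)) (Fin (2 * 3 - 1)) ℝ) - adjMat 3).det
      = l ^ 2 * (l ^ 3 - 2 * l - 2) ∧
    (∀ n : ℕ, 3 ≤ n →
      (l • (1 : Matrix (Fin (2 * n - 1)) (Fin (2 * n - 1)) ℝ) - adjMat n).det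
        = l ^ (n - 1) * (l ^ n - 2 * ∑ i ∈ Finset.range (n - 1), l ^ i)) := by
  have closed_form (n : ℕ) (hn : 3 ≤ n) := det_smul_one_sub_adjMat (n := n) (by omega) l
  refine ⟨fun n hn => ?_, ?_, closed_form⟩
  · obtain ⟨k, rfl⟩ : ∃ k, n = k + 1 := ⟨n - 1, by omega⟩
    rw [closed_form (k + 1 + 1) (by omega), closed_form (k + 1) hn, Nat.add_sub_cancel,
      Nat.add_sub_cancel, geom_sum_succ]
    ring
  · rw [closed_form 3 le_rfl, show 3 - 1 = 2 from rfl, sum_range_succ, sum_range_one]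
    ring
end

section
/- For n ≥ 3, the vector u with u_k = (1 + λ + ... + λ^k)/λ^k for 0 ≤ k ≤ n−2, u_{n-1} = λ, and u_{n-1+i} = u_{n-1-i} for 1 ≤ i ≤ n−1 is a left eigenvector of S_n with eigenvalue λ, where λ satisfies λ^n = 2(1 + λ + ... + λ^{n-2}). -/
open Finset Matrix

noncomputable def geomSumDivPow (l : ℝ) (k : ℕ) : ℝ := (∑ i ∈ range (k + 1), l ^ i) / l ^ k

lemma geomSumDivPow_zero (l : ℝ) : geomSumDivPow l 0 = 1 := by
  simp [geomSumDivPow]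

lemma mul_geomSumDivPow_succ {l : ℝ} (hl : l ≠ 0) (k : ℕ) :
    l * geomSumDivPow l (k + 1) = geomSumDivPow l k + l := by
  rw [geomSumDivPow, geomSumDivPow, sum_range_succ _ (k + 1)]
  field_simp
  ring

lemma geomSumDivPow_add_self {l : ℝ} (hl : l ≠ 0) {m : ℕ}
    (h : l ^ (m + 2) = 2 * ∑ i ∈ range (m + 1), l ^ i) :
    geomSumDivPow l m + geomSumDivPow l m = l * l := by
  rw [geomSumDivPow, ← two_mul, ← mul_div_assoc, ← h]
  field_simp
  ring

lemma two_le_of_pow_eq_two_mul_geom_sum {l : ℝ} (hl : l ≠ 0) {n : ℕ}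
    (h : l ^ n = 2 * ∑ i ∈ range (n - 1), l ^ i) : 2 ≤ n := by
  by_contra! hn
  interval_cases n <;> simp_all

lemma sum_fin_ite_val_eq_and {M : Type*} [AddCommMonoid M] (N a : ℕ) (p : Prop) [Decidable p]
    (f : ℕ → M) :
    ∑ r : Fin N, (if r.val = a ∧ p then f r else 0) = if a < N ∧ p then f a else 0 := by
  rw [Fin.sum_univ_eq_sum_range (fun r => if r = a ∧ p then f r else 0)]
  simp only [ite_and, sum_ite_eq', mem_range]

lemma vecMul_adjMat_apply {n : ℕ} (w : ℕ → ℝ) (c : Fin (2 * n - 1)) :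
    vecMul (fun r : Fin (2 * n - 1) => w r) (adjMat n) c =
      (if 0 < c.val ∧ c.val < n then w (c - 1) else 0)
      + (if c.val ≠ n - 1 then w (n - 1) else 0)
      + (if n - 1 ≤ c.val ∧ c.val < 2 * n - 2 then w (c + 1) else 0) := by
  have hentry : ∀ r : Fin (2 * n - 1), w r * adjMat n r c =
      (if r.val = c - 1 ∧ (0 < c.val ∧ c.val < n) then w r else 0)
      + (if r.val = n - 1 ∧ c.val ≠ n - 1 then w r else 0)
      + (if r.val = c + 1 ∧ (n - 1 ≤ c.val ∧ c.val < 2 * n - 2) then w r else 0) := by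
    intro r
    unfold adjMat
    split_ifs <;> first | omega | simp
  simp only [vecMul, dotProduct, hentry, sum_add_distrib, sum_fin_ite_val_eq_and]
  split_ifs <;> first | rfl | omega

noncomputable def adjMatEigvec (n : ℕ) (l : ℝ) (k : ℕ) : ℝ :=
  if k = n - 1 then l else geomSumDivPow l (min k (2 * n - 2 - k))

section adjMatEigvec

variable {n k : ℕ} {l : ℝ}

lemma adjMatEigvec_center : adjMatEigvec n l (n - 1) = l := if_pos rfl

lemma adjMatEigvec_of_lt (hk : k < n - 1) : adjMatEigvec n l k = geomSumDivPow l k := by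
  rw [adjMatEigvec, if_neg hk.ne, min_eq_left (by omega)]

lemma adjMatEigvec_of_gt (hk : n - 1 < k) :
    adjMatEigvec n l k = geomSumDivPow l (2 * n - 2 - k) := by
  rw [adjMatEigvec, if_neg hk.ne', min_eq_right (by omega)]

lemma adjMatEigvec_column (hn : 2 ≤ n) (hl0 : l ≠ 0)
    (hl : l ^ n = 2 * ∑ i ∈ range (n - 1), l ^ i) {c : ℕ} (hc : c < 2 * n - 1) :
    (if 0 < c ∧ c < n then adjMatEigvec n l (c - 1) else 0)
      + (if c ≠ n - 1 then adjMatEigvec n l (n - 1) else 0)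
      + (if n - 1 ≤ c ∧ c < 2 * n - 2 then adjMatEigvec n l (c + 1) else 0)
      = l * adjMatEigvec n l c := by
  obtain ⟨m, rfl⟩ : ∃ m, n = m + 2 := ⟨n - 2, by omega⟩
  rcases (show c = 0 ∨ (0 < c ∧ c < m + 1) ∨ c = m + 1 ∨ (m + 1 < c ∧ c < 2 * m + 2)
      ∨ c = 2 * m + 2 by omega) with rfl | ⟨hc0, hcm⟩ | rfl | ⟨hmc, hc2⟩ | rfl
  · rw [if_neg (by omega), if_pos (by omega), if_neg (by omega), adjMatEigvec_center,
      adjMatEigvec_of_lt (by omega), geomSumDivPow_zero]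
    ring
  · obtain ⟨j, rfl⟩ : ∃ j, c = j + 1 := ⟨c - 1, by omega⟩
    rw [if_pos (by omega), if_pos (by omega), if_neg (by omega), adjMatEigvec_center,
      adjMatEigvec_of_lt (by omega), adjMatEigvec_of_lt (by omega), Nat.add_sub_cancel,
      mul_geomSumDivPow_succ hl0, add_zero]
  · rw [if_pos (by omega), if_neg (by omega), if_pos (by omega), adjMatEigvec_of_lt (by omega),
      adjMatEigvec_of_gt (by omega), show 2 * (m + 2) - 2 - (m + 1 + 1) = m by omega,
      Nat.add_sub_cancel, add_zero, geomSumDivPow_add_self hl0 hl,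
      show m + 1 = m + 2 - 1 from rfl, adjMatEigvec_center]
  · obtain ⟨j, hj⟩ : ∃ j, 2 * (m + 2) - 2 - c = j + 1 := ⟨2 * m + 1 - c, by omega⟩
    rw [if_neg (by omega), if_pos (by omega), if_pos (by omega), adjMatEigvec_center,
      adjMatEigvec_of_gt (by omega), adjMatEigvec_of_gt (by omega), hj,
      show 2 * (m + 2) - 2 - (c + 1) = j by omega, mul_geomSumDivPow_succ hl0]
    ring
  · rw [if_neg (by omega), if_pos (by omega), if_neg (by omega), adjMatEigvec_center,
      adjMatEigvec_of_gt (by omega), show 2 * (m + 2) - 2 - (2 * m + 2) = 0 by omega,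
      geomSumDivPow_zero]
    ring

end adjMatEigvec

theorem stmt15_general (n : ℕ) (l : ℝ) (hlpos : 0 < l)
    (hl : l ^ n = 2 * ∑ i ∈ Finset.range (n - 1), l ^ i)
    (u : Fin (2 * n - 1) → ℝ)
    (hu : ∀ k, u k = if k.val = n - 1 then l else
      (∑ i ∈ Finset.range (min k.val (2 * n - 2 - k.val) + 1), l ^ i)
        / l ^ (min k.val (2 * n - 2 - k.val))) :
    Matrix.vecMul u (adjMat n) = l • u := by
  obtain rfl : u = fun k : Fin (2 * n - 1) => adjMatEigvec n l k := funext hu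
  funext c
  rw [vecMul_adjMat_apply, Pi.smul_apply, smul_eq_mul]
  exact adjMatEigvec_column (two_le_of_pow_eq_two_mul_geom_sum hlpos.ne' hl) hlpos.ne' hl c.isLt

/-- For `n ≥ 3`, the vector `u` with `u_k = (1 + λ + ⋯ + λ^k)/λ^k` for `0 ≤ k ≤ n-2`,
`u_{n-1} = λ`, and `u_{n-1+i} = u_{n-1-i}`, is a left eigenvector of `S_n` with
eigenvalue `λ`, where `λ > 0` solves `λ^n = 2(1 + λ + ⋯ + λ^{n-2})`. -/
theorem stmt15 (n : ℕ) (hn : 3 ≤ n) (l : ℝ) (hlpos : 0 < l)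
    (hl : l ^ n = 2 * ∑ i ∈ Finset.range (n - 1), l ^ i)
    (u : Fin (2 * n - 1) → ℝ)
    (hu : ∀ k, u k = if k.val = n - 1 then l else
      (∑ i ∈ Finset.range (min k.val (2 * n - 2 - k.val) + 1), l ^ i)
        / l ^ (min k.val (2 * n - 2 - k.val))) :
    Matrix.vecMul u (adjMat n) = l • u :=
  stmt15_general n l hlpos hl u hu
end

section
/- Let n ≥ 3 and λ ∈ (1,2) satisfy λ^n = 2(1 + λ + ... + λ^{n-2}). Then (2/((λ−1)λ^n))·(λ^{n-1} − n + λ^n/2) < 2. -/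
/-! Summing the geometric series turns the defining equation into `(λ - 1) λ^n = 2 (λ^{n-1} - 1)`;
after clearing the denominator the claim becomes `λ^n < 2 λ^{n-1} + 2 (n - 2)`, and `λ^n = λ · λ^{n-1} < 2 λ^{n-1}` because `λ < 2`. -/

open Finset

lemma sub_one_mul_pow_eq_of_pow_eq_two_mul_geom_sum {l : ℝ} {n : ℕ} (hl1 : l ≠ 1)
    (hl : l ^ n = 2 * ∑ i ∈ range (n - 1), l ^ i) :
    (l - 1) * l ^ n = 2 * (l ^ (n - 1) - 1) := by
  have hl1' : l - 1 ≠ 0 := sub_ne_zero.mpr hl1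
  rw [hl, geom_sum_eq hl1]
  field_simp

theorem stmt16_general (n : ℕ) (l : ℝ) (hl1 : 1 < l) (hl2 : l < 2)
    (hl : l ^ n = 2 * ∑ i ∈ Finset.range (n - 1), l ^ i) :
    2 / ((l - 1) * l ^ n) * (l ^ (n - 1) - n + l ^ n / 2) < 2 := by
  have hkey := sub_one_mul_pow_eq_of_pow_eq_two_mul_geom_sum hl1.ne' hl
  have hden : 0 < (l - 1) * l ^ n := mul_pos (by linarith) (by positivity)
  have hpow_gt : 1 < l ^ (n - 1) := by linarith
  have hn1 : n - 1 ≠ 0 := by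
    rintro h
    simp [h] at hpow_gt
  have hn : (2 : ℝ) ≤ n := by exact_mod_cast (by omega : 2 ≤ n)
  have hsplit : l ^ n = l * l ^ (n - 1) := by
    rw [← pow_succ', Nat.sub_one_add_one (by omega)]
  have hlt : l ^ n < 2 * l ^ (n - 1) := by
    rw [hsplit]
    exact mul_lt_mul_of_pos_right hl2 (by positivity)
  rw [div_mul_eq_mul_div, div_lt_iff₀ hden, hkey]
  linarith

/-- Let `n ≥ 3` and `λ ∈ (1,2)` satisfy `λ^n = 2(1 + λ + ⋯ + λ^{n-2})`. Then
`(2/((λ-1)λ^n))·(λ^{n-1} - n + λ^n/2) < 2`. -/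
theorem stmt16 (n : ℕ) (hn : 3 ≤ n) (l : ℝ) (hl1 : 1 < l) (hl2 : l < 2)
    (hl : l ^ n = 2 * ∑ i ∈ Finset.range (n - 1), l ^ i) :
    2 / ((l - 1) * l ^ n) * (l ^ (n - 1) - n + l ^ n / 2) < 2 :=
  stmt16_general n l hl1 hl2 hl
end

section
/- Let n ≥ 3, β the largest positive root of x^n = x^{n-2} + ... + x + 1, a = 1/(β²−1), b = β/(β²−1), and define c_1 = a, c_i = β^{i-1}a − β^{i-2} + β^{-1} for 2 ≤ i ≤ n−1, c_n = b. Then a = c_1 < c_2 < ... < c_n = b, and the greedy map L_1 defined by L_1(x) = β^{n-i+1}x − β^{n-i} for x ∈ [c_i, c_{i+1}) maps each interval [c_i, c_{i+1}) onto [a, b) (i.e. L_1(c_i) = a and the limit at c_{i+1}^- is b). -/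
/-!
Summing the geometric series turns the equation of `β` into `β^n - 1 = β^(n-1) (β² - 1)`,
i.e. `β^n a - β^(n-1) = a`, and multiplying by `β` gives `β^(n+1) a - β^n = b`. The branch
`x ↦ β^(n-i+1) x - β^(n-i)` sends `c_i` to `β^n a - β^(n-1)` and `c_(i+1)` to
`β^(n+1) a - β^n`, hence to `a` and `b`; since it is increasing and `a < b`, the `c_i` increase.
-/

open Finset

section GreedyExpansion

variable {β : ℝ} {n : ℕ}

theorem one_lt_of_pow_eq_geom_sum (hn : 3 ≤ n) (hβ : 0 < β)
    (h : β ^ n = ∑ i ∈ range (n - 1), β ^ i) : 1 < β := by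
  by_contra! hle
  have hsum : 1 + β ≤ ∑ i ∈ range (n - 1), β ^ i :=
    calc 1 + β = ∑ i ∈ range 2, β ^ i := by simp [sum_range_succ]
      _ ≤ _ := sum_le_sum_of_subset_of_nonneg (range_subset_range.mpr (by omega))
          fun i _ _ => by positivity
  have hpow : β ^ n ≤ β := pow_le_of_le_one hβ.le hle (by omega)
  linarith

theorem pow_sub_one_eq_of_pow_eq_geom_sum (hn : 1 ≤ n)
    (h : β ^ n = ∑ i ∈ range (n - 1), β ^ i) : β ^ n - 1 = β ^ (n - 1) * (β ^ 2 - 1) := by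
  have hgeom : β ^ n * (β - 1) = β ^ (n - 1) - 1 := h ▸ geom_sum_mul β (n - 1)
  obtain ⟨m, rfl⟩ := Nat.exists_eq_add_of_le' hn
  simp only [Nat.add_sub_cancel] at hgeom ⊢
  linear_combination -hgeom

theorem pow_mul_inv_sub_pow_eq (hn : 1 ≤ n) (hβ : 1 < β)
    (h : β ^ n = ∑ i ∈ range (n - 1), β ^ i) :
    β ^ n * (β ^ 2 - 1)⁻¹ - β ^ (n - 1) = (β ^ 2 - 1)⁻¹ := by
  have hd : β ^ 2 - 1 ≠ 0 := by nlinarith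
  field_simp
  linear_combination pow_sub_one_eq_of_pow_eq_geom_sum hn h

theorem pow_succ_mul_inv_sub_pow_eq (hn : 1 ≤ n) (hβ : 1 < β)
    (h : β ^ n = ∑ i ∈ range (n - 1), β ^ i) :
    β ^ (n + 1) * (β ^ 2 - 1)⁻¹ - β ^ n = β * (β ^ 2 - 1)⁻¹ := by
  have hn' : β ^ n = β * β ^ (n - 1) := by rw [← pow_succ']; congr 1; omega
  rw [pow_succ]
  linear_combination β * pow_mul_inv_sub_pow_eq hn hβ h - hn'

theorem pow_succ_mul_sub_pow_eq (hβ : β ≠ 0) (a : ℝ) (m : ℕ) {i : ℕ} (hi : 2 ≤ i) :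
    β ^ (m + 1) * (β ^ (i - 1) * a - β ^ (i - 2) + β⁻¹) - β ^ m
      = β ^ (m + i) * a - β ^ (m + i - 1) := by
  obtain ⟨k, rfl⟩ := Nat.exists_eq_add_of_le' hi
  simp only [show k + 2 - 1 = k + 1 by omega, Nat.add_sub_cancel,
    show m + (k + 2) - 1 = m + k + 1 by omega]
  field_simp
  ring

end GreedyExpansion

/-- Let `β` be the largest positive root of `x^n = x^{n-2} + ⋯ + x + 1` (`n ≥ 3`),
`a = 1/(β²-1)`, `b = β/(β²-1)`, and `c_1 = a`, `c_i = β^{i-1} a - β^{i-2} + β⁻¹` for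
`2 ≤ i ≤ n-1`, `c_n = b`. Then `a = c_1 < c_2 < ⋯ < c_n = b`, and the greedy map
`L_1(x) = β^{n-i+1} x - β^{n-i}` maps each `[c_i, c_{i+1})` onto `[a, b)`:
`L_1(c_i) = a` and `β^{n-i+1} c_{i+1} - β^{n-i} = b`. -/
theorem stmt19 (n : ℕ) (hn : 3 ≤ n) (β : ℝ)
    (hβ : 0 < β ∧ β ^ n = ∑ i ∈ Finset.range (n - 1), β ^ i ∧
      ∀ x : ℝ, 0 < x → x ^ n = ∑ i ∈ Finset.range (n - 1), x ^ i → x ≤ β)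
    (a b : ℝ) (ha : a = (β ^ 2 - 1)⁻¹) (hb : b = β * (β ^ 2 - 1)⁻¹)
    (c : ℕ → ℝ) (hc1 : c 1 = a) (hcn : c n = b)
    (hc : ∀ i : ℕ, 2 ≤ i → i ≤ n - 1 → c i = β ^ (i - 1) * a - β ^ (i - 2) + β⁻¹) :
    (∀ i : ℕ, 1 ≤ i → i < n → c i < c (i + 1)) ∧
    (∀ i : ℕ, 1 ≤ i → i ≤ n - 1 →
      β ^ (n - i + 1) * c i - β ^ (n - i) = a ∧
      β ^ (n - i + 1) * c (i + 1) - β ^ (n - i) = b) := by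
  obtain ⟨hβ0, hroot, -⟩ := hβ
  have hβ1 : 1 < β := one_lt_of_pow_eq_geom_sum hn hβ0 hroot
  have hA : β ^ n * a - β ^ (n - 1) = a := ha ▸ pow_mul_inv_sub_pow_eq (by omega) hβ1 hroot
  have hB : β ^ (n + 1) * a - β ^ n = b :=
    ha ▸ hb ▸ pow_succ_mul_inv_sub_pow_eq (by omega) hβ1 hroot
  have hleft (i : ℕ) (hi : 1 ≤ i) (hin : i ≤ n - 1) : β ^ (n - i + 1) * c i - β ^ (n - i) = a := by
    rcases hi.eq_or_lt with rfl | hi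
    · rwa [hc1, Nat.sub_add_cancel (by omega)]
    · rwa [hc i hi hin, pow_succ_mul_sub_pow_eq hβ0.ne' a _ hi, Nat.sub_add_cancel (by omega)]
  have hright (i : ℕ) (hi : 1 ≤ i) (hin : i ≤ n - 1) :
      β ^ (n - i + 1) * c (i + 1) - β ^ (n - i) = b := by
    rcases Nat.lt_or_ge (i + 1) n with hin' | hin'
    · rwa [hc (i + 1) (by omega) (by omega), pow_succ_mul_sub_pow_eq hβ0.ne' a _ (by omega),
        show n - i + (i + 1) = n + 1 by omega, Nat.add_sub_cancel]
    · have hd : β ^ 2 - 1 ≠ 0 := by nlinarith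
      rw [show i + 1 = n by omega, hcn, show n - i = 1 by omega, hb]
      field_simp
      ring
  refine ⟨fun i hi hin => ?_, fun i hi hin => ⟨hleft i hi hin, hright i hi hin⟩⟩
  have hab : a < b := by
    have : 0 < a := ha ▸ inv_pos.mpr (by nlinarith)
    rw [hb, ← ha]
    nlinarith
  have hmul : β ^ (n - i + 1) * c i < β ^ (n - i + 1) * c (i + 1) := by
    linarith [hleft i hi (by omega), hright i hi (by omega)]
  exact lt_of_mul_lt_mul_left hmul (by positivity)
end
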